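/- Let A be symmetric positive definite and B satisfy ‖B‖ < λ_min(A). Then writing (A+B)⁻¹ = (I+G)A⁻¹, the matrix G satisfies ‖G‖_op ≤ (λ_min(A)/‖B‖ - 1)⁻¹. -/

import Mathlib

/-!
Factor `A + B = A (1 + E)` with `E = A⁻¹ B`. Diagonalizing `A` by a unitary gives
`‖A⁻¹‖ ≤ 1 / λ_min(A)`, so `‖E‖ ≤ ‖B‖ / λ_min(A) < 1`; hence `1 + E` is invertible (Neumann
series) and `1 + G = (1 + E)⁻¹`. Then `G = -(1 + G) E`, whence `‖G‖ ≤ ‖E‖ (1 + ‖G‖)`, i.e.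
`‖G‖ ≤ ‖E‖ / (1 - ‖E‖)`, which is increasing in `‖E‖`.
-/

/-- The minimum eigenvalue of a Hermitian real matrix. -/
noncomputable def lamMin {n : ℕ} {A : Matrix (Fin n) (Fin n) ℝ}
    (hA : A.IsHermitian) : ℝ :=
  ⨅ i, hA.eigenvalues i

/-- The spectral (ℓ²-operator) norm of a real square matrix. -/
noncomputable def spec {n : ℕ} (A : Matrix (Fin n) (Fin n) ℝ) : ℝ :=
  ‖Matrix.toEuclideanCLM (𝕜 := ℝ) A‖

open scoped Matrix.Norms.L2Operator Ring

lemma spec_eq_l2_opNorm {n : ℕ} (A : Matrix (Fin n) (Fin n) ℝ) : spec A = ‖A‖ := rfl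

theorem norm_le_div_one_sub_of_one_add_mul_one_add_eq_one {R : Type*} [NormedRing R] {g e : R}
    (h : (1 + g) * (1 + e) = 1) (he : ‖e‖ < 1) : ‖g‖ ≤ ‖e‖ / (1 - ‖e‖) := by
  have hg : g = -(e + g * e) := by
    rw [eq_neg_iff_add_eq_zero]
    calc g + (e + g * e) = (1 + g) * (1 + e) - 1 := by noncomm_ring
      _ = 0 := by rw [h, sub_self]
  have hle : ‖g‖ ≤ ‖e‖ + ‖g‖ * ‖e‖ :=
    calc ‖g‖ = ‖-(e + g * e)‖ := congrArg _ hg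
      _ = ‖e + g * e‖ := norm_neg _
      _ ≤ ‖e‖ + ‖g‖ * ‖e‖ := (norm_add_le _ _).trans (by grw [norm_mul_le])
  rw [le_div_iff₀ (sub_pos.2 he)]
  linarith

theorem norm_le_of_inverse_add_eq_one_add_mul_inverse {R : Type*} [NormedRing R]
    [HasSummableGeomSeries R] {a b g : R} (ha : IsUnit a) (hab : ‖a⁻¹ʳ * b‖ < 1)
    (hg : (a + b)⁻¹ʳ = (1 + g) * a⁻¹ʳ) : ‖g‖ ≤ ‖a⁻¹ʳ * b‖ / (1 - ‖a⁻¹ʳ * b‖) := by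
  set e := a⁻¹ʳ * b
  have hfactor : a + b = a * (1 + e) := by rw [mul_add, mul_one, Ring.mul_inverse_cancel_left _ _ ha]
  have hunit : IsUnit (a + b) := hfactor ▸ ha.mul
    (by simpa using isUnit_one_sub_of_norm_lt_one (x := -e) (by rwa [norm_neg]))
  refine norm_le_div_one_sub_of_one_add_mul_one_add_eq_one ?_ hab
  calc (1 + g) * (1 + e) = (1 + g) * a⁻¹ʳ * (a * (1 + e)) := by
        rw [mul_assoc, Ring.inverse_mul_cancel_left _ _ ha]
    _ = 1 := by rw [← hfactor, ← hg, Ring.inverse_mul_cancel _ hunit]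

section

open scoped ComplexOrder

namespace Matrix

variable {𝕜 n : Type*} [RCLike 𝕜] [Fintype n] [DecidableEq n]

lemma PosDef.l2_opNorm_inv_le {A : Matrix n n 𝕜} (hA : A.PosDef) :
    ‖A⁻¹‖ ≤ (⨅ i, hA.1.eigenvalues i)⁻¹ := by
  set U : Matrix n n 𝕜 := (hA.1.eigenvectorUnitary : Matrix n n 𝕜)
  have hU : U ∈ unitary (Matrix n n 𝕜) := hA.1.eigenvectorUnitary.2
  set ev := hA.1.eigenvalues
  have hev : ∀ i, 0 < ev i := hA.eigenvalues_pos
  have hA_eq : A = U * diagonal (RCLike.ofReal ∘ ev) * star U := hA.1.spectral_theorem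
  have hinv : A⁻¹ = U * diagonal (RCLike.ofReal ∘ fun i ↦ (ev i)⁻¹) * star U := by
    refine inv_eq_left_inv ?_
    have hdiag : diagonal (RCLike.ofReal ∘ fun i ↦ (ev i)⁻¹) * diagonal (RCLike.ofReal ∘ ev) =
        (1 : Matrix n n 𝕜) := by
      rw [diagonal_mul_diagonal, ← diagonal_one]
      congr 1
      ext i
      simp [(hev i).ne']
    calc _ = U * (diagonal (RCLike.ofReal ∘ fun i ↦ (ev i)⁻¹) * (star U * U) *
          diagonal (RCLike.ofReal ∘ ev)) * star U := by rw [hA_eq]; simp only [mul_assoc]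
      _ = 1 := by
        rw [Unitary.star_mul_self_of_mem hU, mul_one, hdiag, mul_one, Unitary.mul_star_self_of_mem hU]
  rw [hinv, CStarRing.norm_mul_mem_unitary _ (Unitary.star_mem hU),
    CStarRing.norm_mem_unitary_mul _ hU, l2_opNorm_diagonal]
  refine (pi_norm_le_iff_of_nonneg (inv_nonneg.2 (Real.iInf_nonneg fun i ↦ (hev i).le))).2 fun i ↦ ?_
  have : Nonempty n := ⟨i⟩
  obtain ⟨j, hj⟩ := exists_eq_ciInf_of_finite (f := ev)
  simp only [Function.comp_apply, RCLike.norm_ofReal, abs_inv, abs_of_pos (hev i), ← hj]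
  exact inv_anti₀ (hev j) (hj ▸ ciInf_le (Finite.bddBelow_range _) i)

end Matrix

end

open Matrix in
theorem stmt_5 {n : ℕ} (A B : Matrix (Fin n) (Fin n) ℝ) (hA : A.PosDef)
    (hBne : B ≠ 0) (hB : spec B < lamMin hA.1)
    (G : Matrix (Fin n) (Fin n) ℝ) (hG : (A + B)⁻¹ = (1 + G) * A⁻¹) :
    spec G ≤ (lamMin hA.1 / spec B - 1)⁻¹ := by
  simp only [spec_eq_l2_opNorm] at hB ⊢
  set c := lamMin hA.1
  have hs : 0 < ‖B‖ := norm_pos_iff.2 hBne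
  have hc : 0 < c := hs.trans hB
  have hBc : ‖B‖ / c < 1 := (div_lt_one hc).2 hB
  have hE : ‖A⁻¹ * B‖ ≤ ‖B‖ / c :=
    calc ‖A⁻¹ * B‖ ≤ ‖A⁻¹‖ * ‖B‖ := norm_mul_le _ _
      _ ≤ c⁻¹ * ‖B‖ := mul_le_mul_of_nonneg_right hA.l2_opNorm_inv_le (norm_nonneg _)
      _ = ‖B‖ / c := inv_mul_eq_div _ _
  simp only [nonsing_inv_eq_ringInverse] at hG hE
  calc ‖G‖ ≤ ‖A⁻¹ʳ * B‖ / (1 - ‖A⁻¹ʳ * B‖) :=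
        norm_le_of_inverse_add_eq_one_add_mul_inverse hA.isUnit (hE.trans_lt hBc) hG
    _ ≤ ‖B‖ / c / (1 - ‖B‖ / c) := by gcongr
    _ = (c / ‖B‖ - 1)⁻¹ := by field_simp
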